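/- arXiv:1908.02074 — 9 statements merged into one kernel-verified Lean document; each statement's English description precedes it below -/
import Mathlib

section
/- Let V be a Hilbert space, and let V_1, ..., V_M be closed subspaces of V that can be partitioned into M_O classes such that within each class, any two distinct subspaces are orthogonal. Then for any continuous linear functional F on V, the square root of the sum over i of the squared dual norms ||F||_{V_i'}^2 is bounded by sqrt(M_O) times the dual norm ||F||_{V'}. -/
/-!
Represent `F` by its Riesz vector `z`, so that `‖F‖ = ‖z‖`. On a closed subspace `K`, `F` acts as
`⟪P_K z, ·⟫`, hence `‖F|_K‖ ≤ ‖P_K z‖`. The projections onto mutually orthogonal subspaces satisfy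
Bessel's inequality `∑ ‖P_{V_i} z‖² ≤ ‖z‖²`, so each of the `M_O` classes contributes at most `‖F‖²`
to the sum of squared local dual norms.
-/

open scoped RealInnerProductSpace

section Bessel

variable {V ι : Type*} [NormedAddCommGroup V] [InnerProductSpace ℝ V]

theorem norm_sum_sq_eq_sum_norm_sq_of_pairwise_inner_eq_zero {s : Finset ι} {v : ι → V}
    (hv : (s : Set ι).Pairwise fun i j => ⟪v i, v j⟫ = 0) :
    ‖∑ i ∈ s, v i‖ ^ 2 = ∑ i ∈ s, ‖v i‖ ^ 2 := by
  rw [← real_inner_self_eq_norm_sq, sum_inner]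
  refine Finset.sum_congr rfl fun i hi => ?_
  rw [inner_sum, Finset.sum_eq_single_of_mem i hi fun j hj hji => hv hi hj hji.symm,
    real_inner_self_eq_norm_sq]

theorem sum_norm_sq_le_norm_sq_of_inner_eq_norm_sq {s : Finset ι} {v : ι → V} (z : V)
    (hv : (s : Set ι).Pairwise fun i j => ⟪v i, v j⟫ = 0)
    (hz : ∀ i ∈ s, ⟪v i, z⟫ = ‖v i‖ ^ 2) :
    ∑ i ∈ s, ‖v i‖ ^ 2 ≤ ‖z‖ ^ 2 := by
  set S := ∑ i ∈ s, v i
  have hS : ‖S‖ ^ 2 = ⟪S, z⟫ := by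
    rw [norm_sum_sq_eq_sum_norm_sq_of_pairwise_inner_eq_zero hv, sum_inner]
    exact (Finset.sum_congr rfl hz).symm
  have hSz : ‖S‖ ^ 2 ≤ ‖S‖ * ‖z‖ := hS ▸ real_inner_le_norm S z
  rw [← norm_sum_sq_eq_sum_norm_sq_of_pairwise_inner_eq_zero hv]
  nlinarith [norm_nonneg S, norm_nonneg z]

theorem sum_norm_starProjection_sq_le {s : Finset ι} {K : ι → Submodule ℝ V}
    [∀ i, (K i).HasOrthogonalProjection] (hK : (s : Set ι).Pairwise fun i j => K i ⟂ K j)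
    (z : V) :
    ∑ i ∈ s, ‖(K i).starProjection z‖ ^ 2 ≤ ‖z‖ ^ 2 := by
  refine sum_norm_sq_le_norm_sq_of_inner_eq_norm_sq z
    (fun i hi j hj hij => (hK hi hj hij).inner_eq ((K i).starProjection_apply_mem z)
      ((K j).starProjection_apply_mem z)) fun i _ => ?_
  simpa using (K i).re_inner_starProjection_eq_normSq z

end Bessel

section LocalDualNorm

variable {V : Type*} [NormedAddCommGroup V] [InnerProductSpace ℝ V]

theorem norm_innerSL_comp_subtypeL_le (K : Submodule ℝ V) [K.HasOrthogonalProjection] (z : V) :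
    ‖(innerSL ℝ z).comp K.subtypeL‖ ≤ ‖K.starProjection z‖ := by
  refine ContinuousLinearMap.opNorm_le_bound _ (norm_nonneg _) fun x => ?_
  have hx : ⟪z, (x : V)⟫ = ⟪K.starProjection z, x⟫ := by
    rw [K.inner_starProjection_left_eq_right, K.starProjection_mem_subspace_eq_self]
  simpa [hx] using abs_real_inner_le_norm (K.starProjection z) x

theorem sum_norm_comp_subtypeL_sq_le [CompleteSpace V] {ι : Type*} {s : Finset ι}
    {K : ι → Submodule ℝ V} [∀ i, (K i).HasOrthogonalProjection]
    (hK : (s : Set ι).Pairwise fun i j => K i ⟂ K j) (F : V →L[ℝ] ℝ) :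
    ∑ i ∈ s, ‖F.comp (K i).subtypeL‖ ^ 2 ≤ ‖F‖ ^ 2 := by
  set z := (InnerProductSpace.toDual ℝ V).symm F
  have hF : innerSL ℝ z = F := (InnerProductSpace.toDual ℝ V).apply_symm_apply F
  calc ∑ i ∈ s, ‖F.comp (K i).subtypeL‖ ^ 2
      ≤ ∑ i ∈ s, ‖(K i).starProjection z‖ ^ 2 := by
        gcongr with i
        exact hF ▸ norm_innerSL_comp_subtypeL_le (K i) z
    _ ≤ ‖z‖ ^ 2 := sum_norm_starProjection_sq_le hK z
    _ = ‖F‖ ^ 2 := by rw [← hF, innerSL_apply_norm]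

end LocalDualNorm

/-- localized dual norms vs global dual norm under class-orthogonality. -/
theorem dual_norm_localization_efficiency
    {V : Type*} [NormedAddCommGroup V] [InnerProductSpace ℝ V] [CompleteSpace V]
    {M MO : ℕ} (Vs : Fin M → Submodule ℝ V)
    (hclosed : ∀ i, IsClosed ((Vs i : Set V)))
    (cl : Fin M → Fin MO)
    (horth : ∀ i j, i ≠ j → cl i = cl j → ∀ x ∈ Vs i, ∀ y ∈ Vs j, ⟪x, y⟫ = 0)
    (F : V →L[ℝ] ℝ) :
    Real.sqrt (∑ i, ‖F.comp (Vs i).subtypeL‖ ^ 2) ≤ Real.sqrt MO * ‖F‖ := by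
  have := fun i => (hclosed i).completeSpace_coe
  have hclass (k : Fin MO) : ∑ i with cl i = k, ‖F.comp (Vs i).subtypeL‖ ^ 2 ≤ ‖F‖ ^ 2 := by
    refine sum_norm_comp_subtypeL_sq_le (fun i hi j hj hij => ?_) F
    simp only [Finset.coe_filter, Finset.mem_univ, true_and, Set.mem_ofPred_eq] at hi hj
    exact Submodule.isOrtho_iff_inner_eq.mpr (horth i j hij (hi.trans hj.symm))
  calc √(∑ i, ‖F.comp (Vs i).subtypeL‖ ^ 2)
      ≤ √(∑ _k : Fin MO, ‖F‖ ^ 2) := by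
        rw [← Finset.sum_fiberwise Finset.univ cl]
        gcongr with k
        exact hclass k
    _ = √MO * ‖F‖ := by simp [Real.sqrt_mul, Real.sqrt_sq]
end

section
/- Let V be a Hilbert space, V_1,...,V_M subspaces, and P_i : V → V_i linear maps with sum_i P_i(φ) = φ for all φ ∈ V. Let ~V ⊂ V be a subspace and for each i let Π_i be the orthogonal projection onto ~V ∩ V_i, and define local stability constants c_i := sup_{φ≠0} ||(1 - Π_i) P_i(φ)|| / ||φ||. Then for any continuous linear functional F on V vanishing on ~V, it holds that ||F||_{V'} ≤ sum_i c_i ||F||_{V_i'}. -/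
open scoped RealInnerProductSpace

/-!
Each `F φ` splits as `∑ i, F (P i φ)`, and since `F` vanishes on `~V` the term `F (P i φ)` is
unchanged when the `~V ∩ V_i`-component of `P i φ` is removed. The remainder
`(1 - Π_i) P i φ` lies in `V_i`, so `F` evaluates on it with norm at most
`‖F|_{V_i}‖ · c_i ‖φ‖`.
-/

section Localization

variable {𝕜 E G ι : Type*} [NontriviallyNormedField 𝕜] [NormedAddCommGroup E] [NormedSpace 𝕜 E]
  [SeminormedAddCommGroup G] [NormedSpace 𝕜 G]

theorem nonneg_of_forall_norm_le_mul_norm [Nontrivial E] {c : ℝ} (r : E → E)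
    (hr : ∀ x, ‖r x‖ ≤ c * ‖x‖) : 0 ≤ c := by
  obtain ⟨x, hx⟩ := exists_ne (0 : E)
  exact nonneg_of_mul_nonneg_left ((norm_nonneg _).trans (hr x)) (norm_pos_iff.mpr hx)

theorem ContinuousLinearMap.norm_apply_le_opNorm_comp_subtypeL (F : E →L[𝕜] G)
    {K : Submodule 𝕜 E} {x : E} (hx : x ∈ K) : ‖F x‖ ≤ ‖F.comp K.subtypeL‖ * ‖x‖ :=
  (F.comp K.subtypeL).le_opNorm ⟨x, hx⟩

theorem ContinuousLinearMap.opNorm_le_sum_mul_opNorm_comp_subtypeL [Fintype ι]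
    (F : E →L[𝕜] G) (K : ι → Submodule 𝕜 E) (r : ι → E → E) (c : ι → ℝ)
    (hrK : ∀ i x, r i x ∈ K i) (hFr : ∀ x, F x = ∑ i, F (r i x))
    (hrc : ∀ i x, ‖r i x‖ ≤ c i * ‖x‖) :
    ‖F‖ ≤ ∑ i, c i * ‖F.comp (K i).subtypeL‖ := by
  -- on the zero space the `c i` may be negative, so the bound need not be nonnegative there
  rcases subsingleton_or_nontrivial E with hE | hE
  · simp [Subsingleton.elim F 0]
  have hc : ∀ i, 0 ≤ c i := fun i => nonneg_of_forall_norm_le_mul_norm (r i) (hrc i)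
  refine F.opNorm_le_bound (Finset.sum_nonneg fun i _ => mul_nonneg (hc i) (norm_nonneg _))
    fun x => ?_
  calc ‖F x‖ = ‖∑ i, F (r i x)‖ := by rw [← hFr]
    _ ≤ ∑ i, ‖F (r i x)‖ := norm_sum_le _ _
    _ ≤ ∑ i, ‖F.comp (K i).subtypeL‖ * (c i * ‖x‖) := by
      gcongr with i
      exact (F.norm_apply_le_opNorm_comp_subtypeL (hrK i x)).trans
        (mul_le_mul_of_nonneg_left (hrc i x) (norm_nonneg _))
    _ = (∑ i, c i * ‖F.comp (K i).subtypeL‖) * ‖x‖ := by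
      rw [Finset.sum_mul]; exact Finset.sum_congr rfl fun i _ => by ring

end Localization

theorem dual_norm_localization_local_constants_general
    {V : Type*} [NormedAddCommGroup V] [InnerProductSpace ℝ V]
    {M : ℕ} (Vs : Fin M → Submodule ℝ V)
    (P : Fin M → V →ₗ[ℝ] V)
    (hPmem : ∀ i φ, P i φ ∈ Vs i)
    (hPsum : ∀ φ : V, ∑ i, P i φ = φ)
    (tV : Submodule ℝ V) [∀ i, (tV ⊓ Vs i).HasOrthogonalProjection]
    (c : Fin M → ℝ)
    (hc : ∀ i (φ : V),
      ‖P i φ - ((tV ⊓ Vs i).orthogonalProjectionOnto (P i φ) : V)‖ ≤ c i * ‖φ‖)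
    (F : V →L[ℝ] ℝ) (hF : ∀ φ ∈ tV, F φ = 0) :
    ‖F‖ ≤ ∑ i, c i * ‖F.comp (Vs i).subtypeL‖ := by
  set proj := fun i (ψ : V) => ((tV ⊓ Vs i).orthogonalProjectionOnto ψ : V)
  refine F.opNorm_le_sum_mul_opNorm_comp_subtypeL Vs (fun i φ => P i φ - proj i (P i φ)) c
    (fun i φ => sub_mem (hPmem i φ) ((tV ⊓ Vs i).orthogonalProjectionOnto (P i φ)).2.2)
    (fun φ => ?_) hc
  have hFproj : ∀ i ψ, F (proj i ψ) = 0 := fun i ψ =>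
    hF _ ((tV ⊓ Vs i).orthogonalProjectionOnto ψ).2.1
  conv_lhs => rw [← hPsum φ, map_sum]
  simp only [map_sub, hFproj, sub_zero]

/-- localization of the dual norm with local stability constants. -/
theorem dual_norm_localization_local_constants
    {V : Type*} [NormedAddCommGroup V] [InnerProductSpace ℝ V] [CompleteSpace V]
    {M : ℕ} (Vs : Fin M → Submodule ℝ V)
    (P : Fin M → V →ₗ[ℝ] V)
    (hPmem : ∀ i φ, P i φ ∈ Vs i)
    (hPsum : ∀ φ : V, ∑ i, P i φ = φ)
    (tV : Submodule ℝ V) [∀ i, (tV ⊓ Vs i).HasOrthogonalProjection]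
    (c : Fin M → ℝ)
    (hc : ∀ i (φ : V),
      ‖P i φ - ((tV ⊓ Vs i).orthogonalProjectionOnto (P i φ) : V)‖ ≤ c i * ‖φ‖)
    (F : V →L[ℝ] ℝ) (hF : ∀ φ ∈ tV, F φ = 0) :
    ‖F‖ ≤ ∑ i, c i * ‖F.comp (Vs i).subtypeL‖ :=
  dual_norm_localization_local_constants_general Vs P hPmem hPsum tV c hc F hF
end

section
/- Let V be a Hilbert space, V_1,...,V_M subspaces, P_i : V → V_i linear maps with sum_i P_i = id, ~V ⊂ V a subspace, and Π_i the orthogonal projection onto ~V ∩ V_i. Define the global stability constant c_pu := sup_{φ≠0} ( sum_i ||(1 - Π_i) P_i(φ)||² )^{1/2} / ||φ||. Then for any continuous linear functional F on V vanishing on ~V, ||F||_{V'} ≤ c_pu · ( sum_i ||F||_{V_i'}² )^{1/2}. -/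
open scoped RealInnerProductSpace

/-!
Write `φ = ∑ i, P i φ`. Since `F` vanishes on `tV ⊓ Vs i`, the summand `P i φ` can be replaced by
its residual `(1 - Π_i) P i φ ∈ Vs i`, on which `F` is bounded by its norm restricted to `Vs i`.
Cauchy–Schwarz over `i` and the definition of `cpu` then give
`|F φ| ≤ (∑ i, ‖F|_{Vs i}‖²)^{1/2} (∑ i, ‖(1 - Π_i) P i φ‖²)^{1/2} ≤ (∑ i, ‖F|_{Vs i}‖²)^{1/2} cpu ‖φ‖`.
-/

namespace ContinuousLinearMap

variable {𝕜 E G : Type*} [NontriviallyNormedField 𝕜] [NormedAddCommGroup E] [NormedSpace 𝕜 E]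
  [SeminormedAddCommGroup G] [NormedSpace 𝕜 G]

theorem opNorm_le_bound_of_nontrivial [Nontrivial E] (f : E →L[𝕜] G) {M : ℝ}
    (hM : ∀ x, ‖f x‖ ≤ M * ‖x‖) : ‖f‖ ≤ M := by
  obtain ⟨x, hx⟩ := exists_ne (0 : E)
  have hM₀ : 0 ≤ M :=
    nonneg_of_mul_nonneg_left ((norm_nonneg _).trans (hM x)) (norm_pos_iff.mpr hx)
  exact f.opNorm_le_bound hM₀ hM

theorem norm_apply_le_norm_comp_subtypeL_mul_norm (f : E →L[𝕜] G) (W : Submodule 𝕜 E) {x : E}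
    (hx : x ∈ W) : ‖f x‖ ≤ ‖f.comp W.subtypeL‖ * ‖x‖ :=
  (f.comp W.subtypeL).le_opNorm ⟨x, hx⟩

end ContinuousLinearMap

theorem ContinuousLinearMap.abs_apply_sum_le_sqrt_sum_sq_norm_comp_subtypeL_mul
    {E ι : Type*} [NormedAddCommGroup E] [NormedSpace ℝ E] [Fintype ι]
    (f : E →L[ℝ] ℝ) (W : ι → Submodule ℝ E) {x : ι → E} (hx : ∀ i, x i ∈ W i) :
    |f (∑ i, x i)| ≤
      Real.sqrt (∑ i, ‖f.comp (W i).subtypeL‖ ^ 2) * Real.sqrt (∑ i, ‖x i‖ ^ 2) :=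
  calc |f (∑ i, x i)| = |∑ i, f (x i)| := by rw [map_sum]
    _ ≤ ∑ i, |f (x i)| := Finset.abs_sum_le_sum_abs _ _
    _ ≤ ∑ i, ‖f.comp (W i).subtypeL‖ * ‖x i‖ :=
        Finset.sum_le_sum fun i _ => f.norm_apply_le_norm_comp_subtypeL_mul_norm (W i) (hx i)
    _ ≤ _ := Real.sum_mul_le_sqrt_mul_sqrt _ _ _

section OrthogonalResidual

variable {𝕜 V G : Type*} [RCLike 𝕜] [NormedAddCommGroup V] [InnerProductSpace 𝕜 V]
  {K : Submodule 𝕜 V} [K.HasOrthogonalProjection]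

theorem LinearMap.map_sub_orthogonalProjectionOnto [AddCommGroup G] [Module 𝕜 G]
    (f : V →ₗ[𝕜] G) (hf : ∀ x ∈ K, f x = 0) (v : V) :
    f (v - K.orthogonalProjectionOnto v) = f v := by
  rw [map_sub, hf _ (K.orthogonalProjectionOnto v).2, sub_zero]

theorem Submodule.sub_orthogonalProjectionOnto_mem {W : Submodule 𝕜 V} (hKW : K ≤ W) {v : V}
    (hv : v ∈ W) : v - K.orthogonalProjectionOnto v ∈ W :=
  W.sub_mem hv (hKW (K.orthogonalProjectionOnto v).2)

end OrthogonalResidual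

theorem dual_norm_localization_global_constant_general
    {V : Type*} [NormedAddCommGroup V] [InnerProductSpace ℝ V]
    {M : ℕ} (Vs : Fin M → Submodule ℝ V)
    (P : Fin M → V →ₗ[ℝ] V)
    (hPmem : ∀ i φ, P i φ ∈ Vs i)
    (hPsum : ∀ φ : V, ∑ i, P i φ = φ)
    (tV : Submodule ℝ V) [∀ i, Submodule.HasOrthogonalProjection (tV ⊓ Vs i)]
    (cpu : ℝ)
    (hcpu : ∀ φ : V,
      Real.sqrt (∑ i, ‖P i φ - (Submodule.orthogonalProjectionOnto (tV ⊓ Vs i) (P i φ) : V)‖ ^ 2)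
        ≤ cpu * ‖φ‖)
    (F : V →L[ℝ] ℝ) (hF : ∀ φ ∈ tV, F φ = 0) :
    ‖F‖ ≤ cpu * Real.sqrt (∑ i, ‖F.comp (Vs i).subtypeL‖ ^ 2) := by
  rcases subsingleton_or_nontrivial V with hV | hV
  · simp [ContinuousLinearMap.opNorm_subsingleton]
  refine F.opNorm_le_bound_of_nontrivial fun φ => ?_
  set r : Fin M → V := fun i => P i φ - (tV ⊓ Vs i).orthogonalProjectionOnto (P i φ)
  have hFφ : F φ = F (∑ i, r i) := by
    conv_lhs => rw [← hPsum φ]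
    simp only [r, map_sum]
    exact Finset.sum_congr rfl fun i _ =>
      (F.toLinearMap.map_sub_orthogonalProjectionOnto (fun x hx => hF x (Submodule.mem_inf.mp hx).1) _).symm
  have hr : ∀ i, r i ∈ Vs i := fun i =>
    Submodule.sub_orthogonalProjectionOnto_mem inf_le_right (hPmem i φ)
  calc ‖F φ‖ = |F (∑ i, r i)| := by rw [hFφ, Real.norm_eq_abs]
    _ ≤ Real.sqrt (∑ i, ‖F.comp (Vs i).subtypeL‖ ^ 2) * Real.sqrt (∑ i, ‖r i‖ ^ 2) :=
        F.abs_apply_sum_le_sqrt_sum_sq_norm_comp_subtypeL_mul Vs hr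
    _ ≤ Real.sqrt (∑ i, ‖F.comp (Vs i).subtypeL‖ ^ 2) * (cpu * ‖φ‖) := by gcongr; exact hcpu φ
    _ = cpu * Real.sqrt (∑ i, ‖F.comp (Vs i).subtypeL‖ ^ 2) * ‖φ‖ := by ring

/-- localization of the dual norm with a global stability constant. -/
theorem dual_norm_localization_global_constant
    {V : Type*} [NormedAddCommGroup V] [InnerProductSpace ℝ V] [CompleteSpace V]
    {M : ℕ} (Vs : Fin M → Submodule ℝ V)
    (P : Fin M → V →ₗ[ℝ] V)
    (hPmem : ∀ i φ, P i φ ∈ Vs i)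
    (hPsum : ∀ φ : V, ∑ i, P i φ = φ)
    (tV : Submodule ℝ V) [∀ i, Submodule.HasOrthogonalProjection (tV ⊓ Vs i)]
    (cpu : ℝ)
    (hcpu : ∀ φ : V,
      Real.sqrt (∑ i, ‖P i φ - (Submodule.orthogonalProjectionOnto (tV ⊓ Vs i) (P i φ) : V)‖ ^ 2)
        ≤ cpu * ‖φ‖)
    (F : V →L[ℝ] ℝ) (hF : ∀ φ ∈ tV, F φ = 0) :
    ‖F‖ ≤ cpu * Real.sqrt (∑ i, ‖F.comp (Vs i).subtypeL‖ ^ 2) :=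
  dual_norm_localization_global_constant_general Vs P hPmem hPsum tV cpu hcpu F hF
end

section
/- Under the assumptions of the standard robust and efficient absolute a posteriori error estimator Δ(ũ) with ||u−ũ|| ≤ Δ(ũ) ≤ η||u−ũ||, and assuming Δ(ũ) < ||ũ||, the relative error estimator Δ_rel^new(ũ) := Δ(ũ)/(||ũ|| − Δ(ũ)) satisfies ||u−ũ||/||u|| ≤ Δ_rel^new(ũ) ≤ (1 + 2·Δ_rel^new(ũ))·η·||u−ũ||/||u||. -/
/-- the new relative a posteriori error estimator
`Δ_rel^new = Δ/(‖ut‖ - Δ)` is robust and efficient. -/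
theorem new_relative_error_estimator
    {V : Type*} [NormedAddCommGroup V] (u ut : V) (Δ η : ℝ)
    (hlow : ‖u - ut‖ ≤ Δ) (hupp : Δ ≤ η * ‖u - ut‖) (hη : 1 ≤ η)
    (hΔ : Δ < ‖ut‖) (hu : u ≠ 0) :
    ‖u - ut‖ / ‖u‖ ≤ Δ / (‖ut‖ - Δ) ∧
      Δ / (‖ut‖ - Δ) ≤ (1 + 2 * (Δ / (‖ut‖ - Δ))) * η * (‖u - ut‖ / ‖u‖) := by
  have hupos : (0:ℝ) < ‖u‖ := norm_pos_iff.mpr hu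
  have hsub : (0:ℝ) < ‖ut‖ - Δ := by linarith
  have h1 : ‖ut‖ - ‖u‖ ≤ ‖u - ut‖ := by
    have := norm_sub_norm_le ut u
    rw [norm_sub_rev] at this; linarith
  have h2 : ‖u‖ - ‖ut‖ ≤ ‖u - ut‖ := norm_sub_norm_le u ut
  have hlb : ‖ut‖ - Δ ≤ ‖u‖ := by linarith
  have he : (0:ℝ) ≤ ‖u - ut‖ := norm_nonneg _
  constructor
  · rw [div_le_div_iff₀ hupos hsub]
    nlinarith
  · have hrw : (1 + 2 * (Δ / (‖ut‖ - Δ))) * η * (‖u - ut‖ / ‖u‖)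
        = ((‖ut‖ + Δ) * η * ‖u - ut‖) / ((‖ut‖ - Δ) * ‖u‖) := by
      rw [eq_div_iff (by positivity : ((‖ut‖ - Δ) * ‖u‖) ≠ 0)]
      field_simp
      ring_nf
    rw [hrw, div_le_div_iff₀ hsub (by positivity)]
    have hΔη : Δ * ‖u‖ ≤ (‖ut‖ + Δ) * (η * ‖u - ut‖) := by
      have ha : ‖u‖ ≤ ‖ut‖ + Δ := by linarith
      have hΔ0 : (0:ℝ) ≤ Δ := le_trans he hlow
      nlinarith
    nlinarith
end

section
/- Let A be a real N_R × N_S matrix representing a linear operator T between finite dimensional Hilbert spaces S and R with symmetric positive definite inner product matrices M_S and M_R. Let σ̲_j denote the singular values of A (non-increasing) and σ_j the singular values of the operator T with respect to the Hilbert space inner products (non-increasing). Then σ̲_j ≤ sqrt(λ_max(M_S)/λ_min(M_R)) · σ_j for all j up to the rank of T. -/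
/-!
For `x ≠ 0` the two eigenvalue bounds give `|Ax|² ≤ (Ax)ᵀ M_R (Ax) / λ_min` and
`xᵀ M_S x ≤ λ_max |x|²`, so `|Ax| / |x| ≤ √(λ_max / λ_min) · ‖Ax‖_R / ‖x‖_S` pointwise. The
minimax characterisation (an infimum over the nonzero vectors of a `(j+1)`-dimensional subspace,
then a supremum over such subspaces) preserves this inequality. Because `⨆` of an unbounded
family of reals is `0`, the supremum step also needs `‖Ax‖_R / ‖x‖_S` to be bounded; this comes
from compactness of the unit sphere, on which `xᵀ M_S x` attains a positive minimum.
-/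

open Matrix

/-- The norm on `ℝ^n` induced by a (positive definite) inner product matrix `Mmat`. -/
noncomputable def matNorm {n : ℕ} (Mmat : Matrix (Fin n) (Fin n) ℝ) (x : Fin n → ℝ) : ℝ :=
  Real.sqrt (x ⬝ᵥ Mmat.mulVec x)

/-- The `j`-th singular value (0-based, non-increasing) of the linear operator with matrix
`A`, with respect to given norms on source and range, characterized via the
Courant minimax principle. -/
noncomputable def minimaxSV {m n : ℕ} (normR : (Fin m → ℝ) → ℝ) (normS : (Fin n → ℝ) → ℝ)
    (A : Matrix (Fin m) (Fin n) ℝ) (j : ℕ) : ℝ :=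
  ⨆ W : {W : Submodule ℝ (Fin n → ℝ) // Module.finrank ℝ W = j + 1},
    ⨅ x : {x : Fin n → ℝ // x ∈ W.1 ∧ x ≠ 0}, normR (A.mulVec x.1) / normS x.1

section Homogeneous

variable {E : Type*} [NormedAddCommGroup E] [NormedSpace ℝ E] {f : E → ℝ}

lemma eq_norm_sq_mul_of_homogeneous (hf : ∀ (c : ℝ) x, f (c • x) = c ^ 2 * f x) (x : E) :
    f x = ‖x‖ ^ 2 * f (‖x‖⁻¹ • x) := by
  rcases eq_or_ne x 0 with rfl | hx
  · simpa using hf 0 0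
  · rw [hf, ← mul_assoc, ← mul_pow, mul_inv_cancel₀ (norm_ne_zero_iff.2 hx), one_pow, one_mul]

lemma exists_le_mul_norm_sq_of_homogeneous [FiniteDimensional ℝ E] (hcont : Continuous f)
    (hf : ∀ (c : ℝ) x, f (c • x) = c ^ 2 * f x) : ∃ K, 0 ≤ K ∧ ∀ x, f x ≤ K * ‖x‖ ^ 2 := by
  obtain ⟨K, hK⟩ := (isCompact_sphere (0 : E) 1).bddAbove_image hcont.continuousOn
  refine ⟨max K 0, le_max_right _ _, fun x => ?_⟩
  rw [eq_norm_sq_mul_of_homogeneous hf x, mul_comm]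
  rcases eq_or_ne x 0 with rfl | hx
  · simp
  refine mul_le_mul_of_nonneg_right ((hK ⟨_, ?_, rfl⟩).trans (le_max_left _ _)) (by positivity)
  simpa using norm_smul_inv_norm (𝕜 := ℝ) hx

lemma exists_pos_mul_norm_sq_le_of_homogeneous [FiniteDimensional ℝ E] (hcont : Continuous f)
    (hf : ∀ (c : ℝ) x, f (c • x) = c ^ 2 * f x) (hpos : ∀ x, x ≠ 0 → 0 < f x) :
    ∃ m, 0 < m ∧ ∀ x, m * ‖x‖ ^ 2 ≤ f x := by
  obtain ⟨m, hm, hmf⟩ := (isCompact_sphere (0 : E) 1).exists_forall_le' hcont.continuousOn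
    fun y hy => hpos y (ne_zero_of_mem_unit_sphere ⟨y, hy⟩)
  refine ⟨m, hm, fun x => ?_⟩
  rw [eq_norm_sq_mul_of_homogeneous hf x, mul_comm]
  rcases eq_or_ne x 0 with rfl | hx
  · simp
  refine mul_le_mul_of_nonneg_left (hmf _ ?_) (by positivity)
  simpa using norm_smul_inv_norm (𝕜 := ℝ) hx

end Homogeneous

lemma dotProduct_mulVec_smul_self {n R : Type*} [Fintype n] [CommSemiring R] (M : Matrix n n R)
    (c : R) (x : n → R) : (c • x) ⬝ᵥ M *ᵥ (c • x) = c ^ 2 * (x ⬝ᵥ M *ᵥ x) := by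
  rw [mulVec_smul, smul_dotProduct, dotProduct_smul, smul_eq_mul, smul_eq_mul, sq, mul_assoc]

lemma exists_matNorm_mulVec_div_matNorm_le {m n : ℕ} (A : Matrix (Fin m) (Fin n) ℝ)
    (MR : Matrix (Fin m) (Fin m) ℝ) {MS : Matrix (Fin n) (Fin n) ℝ} (hMS : MS.PosDef) :
    ∃ C, ∀ x, x ≠ 0 → matNorm MR (A *ᵥ x) / matNorm MS x ≤ C := by
  obtain ⟨K, hK0, hK⟩ := exists_le_mul_norm_sq_of_homogeneous
    (f := fun x : Fin n → ℝ => (A *ᵥ x) ⬝ᵥ MR *ᵥ (A *ᵥ x)) (by fun_prop)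
    fun c x => by rw [mulVec_smul, dotProduct_mulVec_smul_self]
  obtain ⟨μ, hμ, hμS⟩ := exists_pos_mul_norm_sq_le_of_homogeneous
    (f := fun x : Fin n → ℝ => x ⬝ᵥ MS *ᵥ x) (by fun_prop) (dotProduct_mulVec_smul_self MS)
    fun x hx => by simpa using hMS.dotProduct_mulVec_pos hx
  refine ⟨√(K / μ), fun x hx => ?_⟩
  have hQ : 0 < x ⬝ᵥ MS *ᵥ x := by simpa using hMS.dotProduct_mulVec_pos hx
  rw [matNorm, matNorm, ← Real.sqrt_div' _ hQ.le]
  refine Real.sqrt_le_sqrt ((div_le_div_iff₀ hQ hμ).2 ?_)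
  calc (A *ᵥ x) ⬝ᵥ MR *ᵥ (A *ᵥ x) * μ ≤ K * ‖x‖ ^ 2 * μ := mul_le_mul_of_nonneg_right (hK x) hμ.le
    _ = K * (μ * ‖x‖ ^ 2) := by ring
    _ ≤ K * (x ⬝ᵥ MS *ᵥ x) := mul_le_mul_of_nonneg_left (hμS x) hK0

lemma sqrt_div_sqrt_le_sqrt_div_mul_sqrt_div_sqrt {t s p q a b : ℝ} (hb : 0 < b) (ht : 0 ≤ t)
    (hq : 0 < q) (hbt : b * t ≤ p) (hqs : q ≤ a * s) : √t / √s ≤ √(a / b) * (√p / √q) := by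
  rcases le_or_gt s 0 with hs | hs
  · rw [Real.sqrt_eq_zero'.2 hs, div_zero]
    positivity
  have ha : 0 < a := pos_of_mul_pos_left (hq.trans_le hqs) hs.le
  rw [← Real.sqrt_div' _ hs.le, ← Real.sqrt_div' _ hq.le, ← Real.sqrt_mul (by positivity)]
  refine Real.sqrt_le_sqrt ?_
  rw [div_mul_div_comm, div_le_div_iff₀ hs (by positivity)]
  have hp : 0 ≤ p := (mul_nonneg hb.le ht).trans hbt
  nlinarith [mul_le_mul_of_nonneg_right hbt hq.le, mul_le_mul_of_nonneg_right hqs hp]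

lemma iSup_iInf_le_mul_iSup_iInf {ι : Type*} {κ : ι → Type*} (hκ : ∀ i, Nonempty (κ i))
    {f g : ∀ i, κ i → ℝ} {c C : ℝ} (hc : 0 ≤ c) (hf : ∀ i k, 0 ≤ f i k) (hg : ∀ i k, 0 ≤ g i k)
    (hfg : ∀ i k, f i k ≤ c * g i k) (hgC : ∀ i k, g i k ≤ C) :
    ⨆ i, ⨅ k, f i k ≤ c * ⨆ i, ⨅ k, g i k := by
  rcases isEmpty_or_nonempty ι with hι | hι
  · simp [Real.iSup_of_isEmpty]
  rw [Real.mul_iSup_of_nonneg hc]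
  refine ciSup_mono ⟨c * C, Set.forall_mem_range.2 fun i => ?_⟩ fun i => ?_
  · obtain ⟨k⟩ := hκ i
    exact mul_le_mul_of_nonneg_left
      ((ciInf_le ⟨0, Set.forall_mem_range.2 (hg i)⟩ k).trans (hgC i k)) hc
  · rw [Real.mul_iInf_of_nonneg hc]
    exact ciInf_mono ⟨0, Set.forall_mem_range.2 (hf i)⟩ (hfg i)

lemma nonempty_ne_zero_of_finrank_eq_succ {K V : Type*} [DivisionRing K] [AddCommGroup V]
    [Module K V] {W : Submodule K V} {j : ℕ} (hW : Module.finrank K W = j + 1) :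
    Nonempty {x : V // x ∈ W ∧ x ≠ 0} := by
  obtain ⟨x, hxW, hx⟩ :=
    Submodule.exists_mem_ne_zero_of_ne_bot (p := W) (by rintro rfl; simp at hW)
  exact ⟨⟨x, hxW, hx⟩⟩

lemma minimaxSV_le_mul_minimaxSV {m n : ℕ} {normR normR' : (Fin m → ℝ) → ℝ}
    {normS normS' : (Fin n → ℝ) → ℝ} (A : Matrix (Fin m) (Fin n) ℝ) (j : ℕ) {c C : ℝ}
    (hc : 0 ≤ c) (hnonneg : ∀ x, 0 ≤ normR (A *ᵥ x) / normS x)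
    (hnonneg' : ∀ x, 0 ≤ normR' (A *ᵥ x) / normS' x)
    (hle : ∀ x, x ≠ 0 → normR (A *ᵥ x) / normS x ≤ c * (normR' (A *ᵥ x) / normS' x))
    (hbdd : ∀ x, x ≠ 0 → normR' (A *ᵥ x) / normS' x ≤ C) :
    minimaxSV normR normS A j ≤ c * minimaxSV normR' normS' A j :=
  iSup_iInf_le_mul_iSup_iInf
    (ι := {W : Submodule ℝ (Fin n → ℝ) // Module.finrank ℝ W = j + 1})
    (κ := fun W => {x : Fin n → ℝ // x ∈ W.1 ∧ x ≠ 0})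
    (fun W => nonempty_ne_zero_of_finrank_eq_succ W.2) hc (fun _ x => hnonneg x.1)
    (fun _ x => hnonneg' x.1) (fun _ x => hle x.1 x.2.2) (fun _ x => hbdd x.1 x.2.2)

theorem matrix_singular_values_le_operator_singular_values_general
    {nS nR : ℕ} (A : Matrix (Fin nR) (Fin nS) ℝ)
    (MS : Matrix (Fin nS) (Fin nS) ℝ) (MR : Matrix (Fin nR) (Fin nR) ℝ)
    (hMS : MS.PosDef)
    (lamMaxS lamMinR : ℝ) (hlamMinR : 0 < lamMinR)
    (hmaxS : ∀ x : Fin nS → ℝ, x ⬝ᵥ MS.mulVec x ≤ lamMaxS * (x ⬝ᵥ x))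
    (hminR : ∀ y : Fin nR → ℝ, lamMinR * (y ⬝ᵥ y) ≤ y ⬝ᵥ MR.mulVec y) :
    ∀ j : ℕ, j < A.rank →
      minimaxSV (fun y => Real.sqrt (y ⬝ᵥ y)) (fun x => Real.sqrt (x ⬝ᵥ x)) A j
        ≤ Real.sqrt (lamMaxS / lamMinR) * minimaxSV (matNorm MR) (matNorm MS) A j := by
  intro j _
  obtain ⟨C, hC⟩ := exists_matNorm_mulVec_div_matNorm_le A MR hMS
  refine minimaxSV_le_mul_minimaxSV A j (Real.sqrt_nonneg _)
    (fun _ => div_nonneg (Real.sqrt_nonneg _) (Real.sqrt_nonneg _))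
    (fun _ => div_nonneg (Real.sqrt_nonneg _) (Real.sqrt_nonneg _)) (fun x hx => ?_) hC
  have hQ : 0 < x ⬝ᵥ MS *ᵥ x := by simpa using hMS.dotProduct_mulVec_pos hx
  exact sqrt_div_sqrt_le_sqrt_div_mul_sqrt_div_sqrt hlamMinR
    (Finset.sum_nonneg fun _ _ => mul_self_nonneg _) hQ (hminR _) (hmaxS _)

/-- the singular values `σ̲_j` of the matrix `A` (Euclidean norms) are bounded
by `sqrt(λmax(M_S)/λmin(M_R))` times the singular values `σ_j` of the operator `T`
(Hilbert space norms induced by the inner product matrices `M_S`, `M_R`). -/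
theorem matrix_singular_values_le_operator_singular_values
    {nS nR : ℕ} (A : Matrix (Fin nR) (Fin nS) ℝ)
    (MS : Matrix (Fin nS) (Fin nS) ℝ) (MR : Matrix (Fin nR) (Fin nR) ℝ)
    (hMS : MS.PosDef) (hMR : MR.PosDef)
    (lamMaxS lamMinR : ℝ) (hlamMinR : 0 < lamMinR)
    (hmaxS : ∀ x : Fin nS → ℝ, x ⬝ᵥ MS.mulVec x ≤ lamMaxS * (x ⬝ᵥ x))
    (hminR : ∀ y : Fin nR → ℝ, lamMinR * (y ⬝ᵥ y) ≤ y ⬝ᵥ MR.mulVec y) :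
    ∀ j : ℕ, j < A.rank →
      minimaxSV (fun y => Real.sqrt (y ⬝ᵥ y)) (fun x => Real.sqrt (x ⬝ᵥ x)) A j
        ≤ Real.sqrt (lamMaxS / lamMinR) * minimaxSV (matNorm MR) (matNorm MS) A j :=
  matrix_singular_values_le_operator_singular_values_general A MS MR hMS lamMaxS lamMinR hlamMinR
    hmaxS hminR
end

section
/- Let T : S → R be a linear operator between finite dimensional Hilbert spaces, ~R ⊂ R a subspace with orthogonal projection P onto ~R, and let matrices be taken with respect to fixed bases with inner product matrices M_S and M_R. Then the operator projection error sup_{ξ≠0} inf_{ζ∈~R} ||Tξ − ζ||_R / ||ξ||_S is bounded by sqrt(λ_max(M_R)/λ_min(M_S)) times the spectral norm of (I − P̲₂)A, where A is the matrix of T and P̲₂ is the Euclidean orthogonal projection matrix onto the coefficient space of ~R. -/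
open Matrix

/-- the operator projection error
`sup_{ξ≠0} inf_{ζ∈~R} ‖Tξ − ζ‖_R / ‖ξ‖_S` is bounded by
`sqrt(λmax(M_R)/λmin(M_S))` times the spectral norm of `(I − P̲₂)A`,
where `P̲₂` is the Euclidean orthogonal projection onto the coefficient space of `~R`. -/
theorem operator_projection_error_le_spectral_norm
    {nS nR : ℕ} (A : Matrix (Fin nR) (Fin nS) ℝ)
    (MS : Matrix (Fin nS) (Fin nS) ℝ) (MR : Matrix (Fin nR) (Fin nR) ℝ)
    (hMS : MS.PosDef) (hMR : MR.PosDef)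
    (W : Submodule ℝ (Fin nR → ℝ))
    (P2 : Matrix (Fin nR) (Fin nR) ℝ)
    (hP2mem : ∀ x, P2.mulVec x ∈ W)
    (hP2id : ∀ x ∈ W, P2.mulVec x = x)
    (hP2orth : ∀ x : Fin nR → ℝ, ∀ w ∈ W, (x - P2.mulVec x) ⬝ᵥ w = 0)
    (lamMaxR lamMinS : ℝ) (hlamMinS : 0 < lamMinS)
    (hmaxR : ∀ y : Fin nR → ℝ, y ⬝ᵥ MR.mulVec y ≤ lamMaxR * (y ⬝ᵥ y))
    (hminS : ∀ x : Fin nS → ℝ, lamMinS * (x ⬝ᵥ x) ≤ x ⬝ᵥ MS.mulVec x)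
    (s : ℝ)
    (hs : ∀ x : Fin nS → ℝ,
      Real.sqrt ((A.mulVec x - P2.mulVec (A.mulVec x)) ⬝ᵥ (A.mulVec x - P2.mulVec (A.mulVec x)))
        ≤ s * Real.sqrt (x ⬝ᵥ x)) :
    ∀ x : Fin nS → ℝ, x ≠ 0 →
      (⨅ ζ : W, matNorm MR (A.mulVec x - ζ.1))
        ≤ Real.sqrt (lamMaxR / lamMinS) * s * matNorm MS x := by
  intro x hx
  set e := A.mulVec x - P2.mulVec (A.mulVec x) with he
  have hxx_pos : 0 < x ⬝ᵥ x := by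
    rcases (dotProduct_self_eq_zero (v := x)).not.mpr hx with h
    have hnn : 0 ≤ x ⬝ᵥ x := Finset.sum_nonneg fun i _ => mul_self_nonneg _
    exact lt_of_le_of_ne hnn (Ne.symm h)
  have hsx : 0 < Real.sqrt (x ⬝ᵥ x) := Real.sqrt_pos.mpr hxx_pos
  have hs0 : 0 ≤ s := by
    have := hs x
    nlinarith [Real.sqrt_nonneg (e ⬝ᵥ e)]
  have hee : 0 ≤ e ⬝ᵥ e := Finset.sum_nonneg fun i _ => mul_self_nonneg _
  have step1 : (⨅ ζ : W, matNorm MR (A.mulVec x - ζ.1)) ≤ matNorm MR e := by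
    have := ciInf_le (f := fun ζ : W => matNorm MR (A.mulVec x - ζ.1))
      ⟨0, by rintro _ ⟨ζ, rfl⟩; exact Real.sqrt_nonneg _⟩
      (⟨P2.mulVec (A.mulVec x), hP2mem _⟩ : W)
    simpa [he] using this
  have step2 : matNorm MR e ≤ Real.sqrt lamMaxR * (s * Real.sqrt (x ⬝ᵥ x)) := by
    calc matNorm MR e ≤ Real.sqrt (lamMaxR * (e ⬝ᵥ e)) := Real.sqrt_le_sqrt (hmaxR e)
      _ = Real.sqrt lamMaxR * Real.sqrt (e ⬝ᵥ e) := Real.sqrt_mul' _ hee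
      _ ≤ Real.sqrt lamMaxR * (s * Real.sqrt (x ⬝ᵥ x)) := by
          exact mul_le_mul_of_nonneg_left (hs x) (Real.sqrt_nonneg _)
  have step3 : Real.sqrt lamMinS * Real.sqrt (x ⬝ᵥ x) ≤ matNorm MS x := by
    rw [← Real.sqrt_mul hlamMinS.le]
    exact Real.sqrt_le_sqrt (hminS x)
  have key : Real.sqrt (lamMaxR / lamMinS) * Real.sqrt lamMinS = Real.sqrt lamMaxR := by
    rw [← Real.sqrt_mul' _ hlamMinS.le, div_mul_cancel₀]
    exact hlamMinS.ne'
  calc (⨅ ζ : W, matNorm MR (A.mulVec x - ζ.1))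
      ≤ Real.sqrt lamMaxR * (s * Real.sqrt (x ⬝ᵥ x)) := step1.trans step2
    _ = Real.sqrt (lamMaxR / lamMinS) * s * (Real.sqrt lamMinS * Real.sqrt (x ⬝ᵥ x)) := by
        rw [← key]; ring
    _ ≤ Real.sqrt (lamMaxR / lamMinS) * s * matNorm MS x := by
        exact mul_le_mul_of_nonneg_left step3 (mul_nonneg (Real.sqrt_nonneg _) hs0)
end

section
/- Let O : S → R be a linear operator between finite dimensional Hilbert spaces, n_t ≥ 1 an integer, 0 < ε_fail < 1, and define the randomized norm estimator Δ := c · max_{i=1..n_t} ||O D_S^{-1} r_i||_R where r_1,...,r_{n_t} are independent standard Gaussian vectors and c := (sqrt(2 λ_min(M_S)) · erf^{-1}(ε_fail^{1/n_t}))^{-1}. Then the probability that Δ < ||O|| is at most ε_fail, i.e. P(||O|| ≤ Δ) ≥ 1 − ε_fail. -/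
open Matrix MeasureTheory ProbabilityTheory

/-- The error function. -/
noncomputable def erf (x : ℝ) : ℝ :=
  (2 / Real.sqrt Real.pi) * ∫ t in (0 : ℝ)..x, Real.exp (-t ^ 2)

/-- The standard Gaussian measure on `ℝ^n` (i.i.d. `N(0,1)` entries). -/
noncomputable def gaussianVec (n : ℕ) : Measure (Fin n → ℝ) :=
  Measure.pi fun _ => gaussianReal 0 1

instance (n : ℕ) : IsProbabilityMeasure (gaussianVec n) := by
  unfold gaussianVec; infer_instance

open Real
open scoped NNReal ENNReal

/-!
For a direction `x` with ratio `r = ‖O x‖_R / ‖x‖_S > 0`, put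
`u = (‖x‖_S / ‖O x‖_R²) • Oᵀ M_R O x`. Cauchy–Schwarz in `R` gives `r |u ⬝ᵥ y| ≤ ‖O y‖_R`, and
`u ⬝ᵥ x = ‖x‖_S ≥ √λ_min |x|` forces `|u|² ≥ λ_min`. For a standard Gaussian `y`, `u ⬝ᵥ y` is a
centred Gaussian of variance `|u|²`, so `c ‖O y‖_R < r` has probability at most
`P(|u ⬝ᵥ y| < 1 / c) ≤ erf (1 / (c √(2 λ_min))) = ε^(1/n_t)`, and all `n_t` independent samples
fail with probability at most `ε`. Letting `r` increase to `‖O‖`, continuity of the measure from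
below gives the same bound for `‖O‖`.
-/

lemma gaussianVec_eq_map_stdGaussian (n : ℕ) :
    gaussianVec n = (stdGaussian (EuclideanSpace ℝ (Fin n))).map WithLp.ofLp := by
  rw [← map_pi_eq_stdGaussian, Measure.map_map (by fun_prop) (by fun_prop)]
  simp [gaussianVec, Function.comp_def]

lemma gaussianVec_map_dotProduct {n : ℕ} (w : Fin n → ℝ) :
    (gaussianVec n).map (w ⬝ᵥ ·) = gaussianReal 0 (w ⬝ᵥ w).toNNReal := by
  have hL : (w ⬝ᵥ ·) ∘ WithLp.ofLp = innerSL ℝ (WithLp.toLp 2 w) := by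
    ext x; simp [dotProduct, EuclideanSpace.inner_eq_star_dotProduct, mul_comm]
  rw [gaussianVec_eq_map_stdGaussian, Measure.map_map (by fun_prop) (by fun_prop), hL,
    IsGaussian.map_eq_gaussianReal, integral_strongDual_stdGaussian, variance_dual_stdGaussian,
    innerSL_apply_norm, EuclideanSpace.real_norm_sq_eq]
  simp [dotProduct, sq]

lemma integral_exp_neg_sq_symm (a : ℝ) :
    ∫ u in -a..a, exp (-u ^ 2) = 2 * ∫ u in (0 : ℝ)..a, exp (-u ^ 2) := by
  have hint (b c : ℝ) : IntervalIntegrable (fun u => exp (-u ^ 2)) volume b c :=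
    (by fun_prop : Continuous fun u : ℝ => exp (-u ^ 2)).intervalIntegrable b c
  have heven : ∫ u in -a..0, exp (-u ^ 2) = ∫ u in (0 : ℝ)..a, exp (-u ^ 2) := by
    have h := intervalIntegral.integral_comp_neg (a := 0) (b := a) fun u => exp (-u ^ 2)
    simp only [neg_sq, neg_zero] at h
    exact h.symm
  rw [← intervalIntegral.integral_add_adjacent_intervals (hint _ 0) (hint 0 _), heven, two_mul]

lemma erf_eq_integral_symm (a : ℝ) : erf a = (√π)⁻¹ * ∫ u in -a..a, exp (-u ^ 2) := by
  rw [erf, integral_exp_neg_sq_symm]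
  ring

lemma monotone_erf : Monotone erf := by
  intro x y hxy
  have hint (b c : ℝ) : IntervalIntegrable (fun u => exp (-u ^ 2)) volume b c :=
    (by fun_prop : Continuous fun u : ℝ => exp (-u ^ 2)).intervalIntegrable b c
  unfold erf
  gcongr
  rw [← intervalIntegral.integral_add_adjacent_intervals (hint 0 x) (hint x y),
    le_add_iff_nonneg_right]
  exact intervalIntegral.integral_nonneg hxy fun u _ => (exp_pos _).le

lemma gaussianReal_abs_lt {v : ℝ≥0} (hv : v ≠ 0) {t : ℝ} (ht : 0 ≤ t) :
    gaussianReal 0 v {y | |y| < t} = ENNReal.ofReal (erf (t / √(2 * v))) := by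
  set s := √(2 * v)
  have hs : 0 < s := by positivity
  have hpdf (y : ℝ) : gaussianPDFReal 0 v y = (√π)⁻¹ * s⁻¹ * exp (-(y / s) ^ 2) := by
    have hs2 : s ^ 2 = 2 * v := sq_sqrt (by positivity)
    rw [gaussianPDFReal, sub_zero, show 2 * π * v = π * s ^ 2 by rw [hs2]; ring,
      sqrt_mul pi_pos.le, sqrt_sq hs.le, mul_inv, div_pow, hs2, neg_div]
  have hIoo : {y : ℝ | |y| < t} = Set.Ioo (-t) t := by ext y; simp [abs_lt]
  rw [hIoo, gaussianReal_apply_eq_integral _ hv, ← integral_Ioc_eq_integral_Ioo,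
    ← intervalIntegral.integral_of_le (by linarith)]
  simp_rw [hpdf]
  rw [intervalIntegral.integral_const_mul, intervalIntegral.integral_comp_div
    (fun u => exp (-u ^ 2)) hs.ne', neg_div, erf_eq_integral_symm, smul_eq_mul]
  field_simp

lemma gaussianVec_abs_dotProduct_lt_le {n : ℕ} {w : Fin n → ℝ} {s t : ℝ} (hs : 0 < s)
    (hw : s ≤ w ⬝ᵥ w) (ht : 0 ≤ t) :
    gaussianVec n {y | |w ⬝ᵥ y| < t} ≤ ENNReal.ofReal (erf (t / √(2 * s))) := by
  have hww : ((w ⬝ᵥ w).toNNReal : ℝ) = w ⬝ᵥ w := Real.coe_toNNReal _ (hs.le.trans hw)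
  have hmeas : MeasurableSet {z : ℝ | |z| < t} := measurableSet_lt (by fun_prop) (by fun_prop)
  rw [show {y | |w ⬝ᵥ y| < t} = (w ⬝ᵥ ·) ⁻¹' {z | |z| < t} from rfl,
    ← Measure.map_apply (by fun_prop) hmeas, gaussianVec_map_dotProduct,
    gaussianReal_abs_lt (by simpa using hs.trans_le hw) ht, hww]
  gcongr
  exact monotone_erf (by gcongr)

lemma Matrix.PosSemidef.sq_dotProduct_mulVec_le {ι : Type*} [Fintype ι] {M : Matrix ι ι ℝ}
    (hM : M.PosSemidef) (x y : ι → ℝ) :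
    (x ⬝ᵥ M *ᵥ y) ^ 2 ≤ (x ⬝ᵥ M *ᵥ x) * (y ⬝ᵥ M *ᵥ y) := by
  classical
  simpa only [Matrix.toBilin'_apply'] using
    LinearMap.BilinForm.apply_sq_le_of_symm (Matrix.toBilin' M)
      (fun z => by simpa [Matrix.toBilin'_apply'] using hM.dotProduct_mulVec_nonneg z)
      (LinearMap.BilinForm.isSymm_iff.1 <|
        Matrix.isSymm_toBilin'_iff_isSymm.2 (Matrix.isHermitian_iff_isSymm.1 hM.isHermitian))
      x y

lemma Matrix.PosSemidef.abs_dotProduct_mulVec_le {n : ℕ} {M : Matrix (Fin n) (Fin n) ℝ}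
    (hM : M.PosSemidef) (x y : Fin n → ℝ) :
    |x ⬝ᵥ M *ᵥ y| ≤ matNorm M x * matNorm M y := by
  rw [matNorm, matNorm, ← sqrt_mul (by simpa using hM.dotProduct_mulVec_nonneg x)]
  exact abs_le_sqrt (hM.sq_dotProduct_mulVec_le x y)

lemma sq_dotProduct_le {ι : Type*} [Fintype ι] (x y : ι → ℝ) :
    (x ⬝ᵥ y) ^ 2 ≤ (x ⬝ᵥ x) * (y ⬝ᵥ y) := by
  classical
  simpa using Matrix.PosSemidef.one.sq_dotProduct_mulVec_le x y

lemma mul_sq_dotProduct_le_dotProduct_self_mul {ι : Type*} [Fintype ι] {MS : Matrix ι ι ℝ}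
    {lamMin : ℝ} (hlamMin : 0 ≤ lamMin) (hmin : ∀ x : ι → ℝ, lamMin * (x ⬝ᵥ x) ≤ x ⬝ᵥ MS *ᵥ x)
    (w x : ι → ℝ) : lamMin * (w ⬝ᵥ x) ^ 2 ≤ (w ⬝ᵥ w) * (x ⬝ᵥ MS *ᵥ x) :=
  calc lamMin * (w ⬝ᵥ x) ^ 2 ≤ lamMin * ((w ⬝ᵥ w) * (x ⬝ᵥ x)) := by
        gcongr; exact sq_dotProduct_le w x
    _ = (w ⬝ᵥ w) * (lamMin * (x ⬝ᵥ x)) := by ring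
    _ ≤ (w ⬝ᵥ w) * (x ⬝ᵥ MS *ᵥ x) := by
        gcongr
        exacts [by simpa using dotProduct_self_star_nonneg w, hmin x]

section TestVector

variable {nS nR : ℕ} (A : Matrix (Fin nR) (Fin nS) ℝ) {MR : Matrix (Fin nR) (Fin nR) ℝ}

lemma abs_transpose_mulVec_dotProduct_le (hMR : MR.PosSemidef) (x y : Fin nS → ℝ) :
    |(Aᵀ *ᵥ MR *ᵥ A *ᵥ x) ⬝ᵥ y| ≤ matNorm MR (A *ᵥ x) * matNorm MR (A *ᵥ y) := by
  rw [mulVec_transpose, ← dotProduct_mulVec, dotProduct_comm, mul_comm]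
  exact hMR.abs_dotProduct_mulVec_le _ _

lemma transpose_mulVec_dotProduct_self (hMR : MR.PosSemidef) (x : Fin nS → ℝ) :
    (Aᵀ *ᵥ MR *ᵥ A *ᵥ x) ⬝ᵥ x = matNorm MR (A *ᵥ x) ^ 2 := by
  rw [mulVec_transpose, ← dotProduct_mulVec, dotProduct_comm, matNorm,
    sq_sqrt (by simpa using hMR.dotProduct_mulVec_nonneg (A *ᵥ x))]

lemma exists_testVector {MS : Matrix (Fin nS) (Fin nS) ℝ} {lamMin : ℝ} (hMR : MR.PosSemidef)
    (hlamMin : 0 ≤ lamMin) (hmin : ∀ x : Fin nS → ℝ, lamMin * (x ⬝ᵥ x) ≤ x ⬝ᵥ MS *ᵥ x)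
    {x : Fin nS → ℝ} (hx : 0 < matNorm MR (A *ᵥ x) / matNorm MS x) :
    ∃ u : Fin nS → ℝ, lamMin ≤ u ⬝ᵥ u ∧
      ∀ y, matNorm MR (A *ᵥ x) / matNorm MS x * |u ⬝ᵥ y| ≤ matNorm MR (A *ᵥ y) := by
  set f := matNorm MR (A *ᵥ x)
  set g := matNorm MS x
  obtain ⟨hf, hg⟩ : 0 < f ∧ 0 < g :=
    (div_pos_iff.1 hx).resolve_right fun h => (sqrt_nonneg _).not_gt h.1
  set w := Aᵀ *ᵥ MR *ᵥ A *ᵥ x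
  refine ⟨(g / f ^ 2) • w, ?_, fun y => ?_⟩
  · have hux : ((g / f ^ 2) • w) ⬝ᵥ x = g := by
      rw [smul_dotProduct, smul_eq_mul,
        show w ⬝ᵥ x = f ^ 2 from transpose_mulVec_dotProduct_self A hMR x]
      field_simp
    have hg2 : x ⬝ᵥ MS *ᵥ x = g ^ 2 := (sq_sqrt <|
      (mul_nonneg hlamMin (by simpa using dotProduct_self_star_nonneg x)).trans (hmin x)).symm
    have := mul_sq_dotProduct_le_dotProduct_self_mul hlamMin hmin ((g / f ^ 2) • w) x
    rw [hux, hg2] at this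
    exact le_of_mul_le_mul_right this (by positivity)
  · rw [smul_dotProduct, smul_eq_mul, abs_mul, abs_of_pos (by positivity)]
    calc f / g * (g / f ^ 2 * |w ⬝ᵥ y|) = f⁻¹ * |w ⬝ᵥ y| := by field_simp
      _ ≤ f⁻¹ * (f * matNorm MR (A *ᵥ y)) := by
          gcongr; exact abs_transpose_mulVec_dotProduct_le A hMR x y
      _ = matNorm MR (A *ᵥ y) := by field_simp

end TestVector

lemma measure_setOf_lt_le_of_forall_lt {Ω : Type*} [MeasurableSpace Ω] (μ : Measure Ω)
    (g : Ω → ℝ) {a : ℝ} {δ : ℝ≥0∞} (h : ∀ b < a, μ {ω | g ω < b} ≤ δ) :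
    μ {ω | g ω < a} ≤ δ := by
  have hunion : {ω | g ω < a} = ⋃ k : ℕ, {ω | g ω < a - 1 / (k + 1)} := by
    ext ω
    simp only [Set.mem_ofPred_eq, Set.mem_iUnion]
    refine ⟨fun hω => ?_, fun ⟨k, hk⟩ => hk.trans (sub_lt_self a Nat.one_div_pos_of_nat)⟩
    obtain ⟨k, hk⟩ := exists_nat_one_div_lt (sub_pos.2 hω)
    exact ⟨k, by linarith⟩
  have hmono : Monotone fun k : ℕ => {ω | g ω < a - 1 / (k + 1)} := fun k l hkl ω hω =>
    lt_of_lt_of_le hω (sub_le_sub_left (Nat.one_div_le_one_div hkl) a)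
  rw [hunion, hmono.measure_iUnion]
  exact iSup_le fun k => h _ (sub_lt_self a Nat.one_div_pos_of_nat)

lemma measure_estimator_lt_le {nS nR nt : ℕ} (A : Matrix (Fin nR) (Fin nS) ℝ)
    {MS : Matrix (Fin nS) (Fin nS) ℝ} {MR : Matrix (Fin nR) (Fin nR) ℝ} {lamMin c : ℝ}
    (hMR : MR.PosSemidef) (hlamMin : 0 < lamMin)
    (hmin : ∀ x : Fin nS → ℝ, lamMin * (x ⬝ᵥ x) ≤ x ⬝ᵥ MS *ᵥ x) (hc0 : 0 < c)
    (x : Fin nS → ℝ) :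
    (Measure.pi fun _ : Fin nt => gaussianVec nS)
        {ω | c * ⨆ i, matNorm MR (A *ᵥ ω i) < matNorm MR (A *ᵥ x) / matNorm MS x}
      ≤ ENNReal.ofReal (erf (1 / (c * √(2 * lamMin)))) ^ nt := by
  set r := matNorm MR (A *ᵥ x) / matNorm MS x
  rcases le_or_gt r 0 with hr | hr
  · have hempty : {ω : Fin nt → Fin nS → ℝ | c * ⨆ i, matNorm MR (A *ᵥ ω i) < r} = ∅ :=
      Set.eq_empty_of_forall_notMem fun ω hω => hω.not_ge <|
        hr.trans (mul_nonneg hc0.le (Real.iSup_nonneg fun i => sqrt_nonneg _))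
    simp [hempty]
  obtain ⟨u, hu, hru⟩ := exists_testVector A hMR hlamMin.le hmin hr
  calc _ ≤ (Measure.pi fun _ : Fin nt => gaussianVec nS)
        (Set.univ.pi fun _ => {y | |u ⬝ᵥ y| < 1 / c}) := by
        refine measure_mono fun ω hω i _ => ?_
        have hi : matNorm MR (A *ᵥ ω i) ≤ ⨆ j, matNorm MR (A *ᵥ ω j) :=
          le_ciSup (f := fun j => matNorm MR (A *ᵥ ω j)) (Set.finite_range _).bddAbove i
        have := hru (ω i)
        simp only [Set.mem_ofPred_eq] at hω ⊢
        rw [lt_div_iff₀ hc0]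
        nlinarith
    _ = gaussianVec nS {y | |u ⬝ᵥ y| < 1 / c} ^ nt := by simp [Measure.pi_pi]
    _ ≤ _ := by
        rw [← div_div]
        gcongr
        exact gaussianVec_abs_dotProduct_lt_le hlamMin hu (by positivity)

theorem randomized_norm_estimator_reliable_general
    {nS nR : ℕ} (A : Matrix (Fin nR) (Fin nS) ℝ)
    (MS : Matrix (Fin nS) (Fin nS) ℝ) (MR : Matrix (Fin nR) (Fin nR) ℝ)
    (hMR : MR.PosDef)
    (lamMin : ℝ) (hlamMin : 0 < lamMin)
    (hmin : ∀ x : Fin nS → ℝ, lamMin * (x ⬝ᵥ x) ≤ x ⬝ᵥ MS.mulVec x)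
    (nt : ℕ) (hnt : 1 ≤ nt) (ε : ℝ) (hε0 : 0 < ε)
    (c : ℝ) (hc0 : 0 < c)
    (hc : erf (1 / (c * Real.sqrt (2 * lamMin))) = ε ^ ((1 : ℝ) / nt)) :
    1 - ENNReal.ofReal ε ≤
      (Measure.pi fun _ : Fin nt => gaussianVec nS)
        {ω | (⨆ x : {x : Fin nS → ℝ // x ≠ 0}, matNorm MR (A.mulVec x.1) / matNorm MS x.1)
              ≤ c * ⨆ i : Fin nt, matNorm MR (A.mulVec (ω i))} := by
  set μ := Measure.pi fun _ : Fin nt => gaussianVec nS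
  set N := ⨆ x : {x : Fin nS → ℝ // x ≠ 0}, matNorm MR (A *ᵥ x.1) / matNorm MS x.1
  set Δ : (Fin nt → Fin nS → ℝ) → ℝ := fun ω => c * ⨆ i, matNorm MR (A *ᵥ ω i)
  have hfail : μ {ω | Δ ω < N} ≤ ENNReal.ofReal ε := by
    refine measure_setOf_lt_le_of_forall_lt μ Δ fun b hb => ?_
    obtain ⟨x, hx⟩ : ∃ x : Fin nS → ℝ, b < matNorm MR (A *ᵥ x) / matNorm MS x := by
      rcases isEmpty_or_nonempty {x : Fin nS → ℝ // x ≠ 0} with h | h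
      -- no nonzero vectors: `N` is the junk supremum `0`, the ratio at `x = 0`
      · exact ⟨0, by simpa [N, matNorm] using hb⟩
      · obtain ⟨x, hx⟩ := exists_lt_of_lt_ciSup hb
        exact ⟨x.1, hx⟩
    calc μ {ω | Δ ω < b} ≤ μ {ω | Δ ω < matNorm MR (A *ᵥ x) / matNorm MS x} :=
          measure_mono fun ω hω => lt_trans hω hx
      _ ≤ ENNReal.ofReal (erf (1 / (c * √(2 * lamMin)))) ^ nt :=
          measure_estimator_lt_le A hMR.posSemidef hlamMin hmin hc0 x
      _ = ENNReal.ofReal ε := by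
          rw [hc, ← ENNReal.ofReal_pow (by positivity), one_div,
            rpow_inv_natCast_pow hε0.le (by omega)]
  rw [tsub_le_iff_right]
  calc 1 = μ Set.univ := measure_univ.symm
    _ ≤ μ ({ω | N ≤ Δ ω} ∪ {ω | Δ ω < N}) := measure_mono fun ω _ => le_or_gt N (Δ ω)
    _ ≤ μ {ω | N ≤ Δ ω} + μ {ω | Δ ω < N} := measure_union_le _ _
    _ ≤ μ {ω | N ≤ Δ ω} + ENNReal.ofReal ε := by gcongr

/-- the randomized a posteriori norm estimator
`Δ = c · max_i ‖O D_S⁻¹ r_i‖_R` with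
`c = (sqrt(2 λmin(M_S)) · erf⁻¹(ε_fail^{1/n_t}))⁻¹`
is an upper bound of the operator norm `‖O‖` with probability at least `1 − ε_fail`. -/
theorem randomized_norm_estimator_reliable
    {nS nR : ℕ} (A : Matrix (Fin nR) (Fin nS) ℝ)
    (MS : Matrix (Fin nS) (Fin nS) ℝ) (MR : Matrix (Fin nR) (Fin nR) ℝ)
    (hMS : MS.PosDef) (hMR : MR.PosDef)
    (lamMin : ℝ) (hlamMin : 0 < lamMin)
    (hmin : ∀ x : Fin nS → ℝ, lamMin * (x ⬝ᵥ x) ≤ x ⬝ᵥ MS.mulVec x)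
    (nt : ℕ) (hnt : 1 ≤ nt) (ε : ℝ) (hε0 : 0 < ε) (hε1 : ε < 1)
    (c : ℝ) (hc0 : 0 < c)
    (hc : erf (1 / (c * Real.sqrt (2 * lamMin))) = ε ^ ((1 : ℝ) / nt)) :
    1 - ENNReal.ofReal ε ≤
      (Measure.pi fun _ : Fin nt => gaussianVec nS)
        {ω | (⨆ x : {x : Fin nS → ℝ // x ≠ 0}, matNorm MR (A.mulVec x.1) / matNorm MS x.1)
              ≤ c * ⨆ i : Fin nt, matNorm MR (A.mulVec (ω i))} :=
  randomized_norm_estimator_reliable_general A MS MR hMR lamMin hlamMin hmin nt hnt ε hε0 c hc0 hc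
end

section
/- Let a be a symmetric coercive bilinear form on a Hilbert space V equipped with the energy norm ||v||_a = sqrt(a(v,v)), V_1,...,V_M closed subspaces with a localizing decomposition and constant c_pu (localization constant of the dual norm: ||F||_{V'} ≤ c_pu (sum_i ||F||_{V_i'}²)^{1/2} for functionals F vanishing on the current reduced space). In each step of residual-based online enrichment—where the space V_k with the largest local residual dual norm is selected and the reduced space is enriched by the local Riesz representative of the residual in V_k—the error contracts: ||u − ũ_{n+1}||_a ≤ sqrt(1 − 1/(M · c_pu²)) · ||u − ũ_n||_a. -/
open scoped RealInnerProductSpace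

set_option maxHeartbeats 1000000
set_option synthInstance.maxHeartbeats 400000

/-- one-step contraction of the residual based online enrichment.
The Hilbert space `V` carries the energy norm, i.e. the bilinear form `a`
coincides with the inner product of `V`. -/
theorem residual_based_enrichment_contraction
    {V : Type*} [NormedAddCommGroup V] [InnerProductSpace ℝ V] [CompleteSpace V]
    (a : V →L[ℝ] V →L[ℝ] ℝ) (ha : ∀ v w : V, a v w = ⟪v, w⟫)
    (f : V →L[ℝ] ℝ) (u : V) (hu : ∀ v, a u v = f v)
    {M : ℕ} (hM : 0 < M) (Vs : Fin M → Submodule ℝ V)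
    (tV : Submodule ℝ V)
    (cpu : ℝ) (hcpu0 : 0 < cpu)
    (hcpu : ∀ F : V →L[ℝ] ℝ, (∀ φ ∈ tV, F φ = 0) →
      ‖F‖ ≤ cpu * Real.sqrt (∑ i, ‖F.comp (Vs i).subtypeL‖ ^ 2))
    (ut : V) (hutmem : ut ∈ tV) (hut : ∀ v ∈ tV, a ut v = f v)
    (k : Fin M)
    (hk : ∀ i, ‖(f - a ut).comp (Vs i).subtypeL‖ ≤ ‖(f - a ut).comp (Vs k).subtypeL‖)
    (uh : V) (huhmem : uh ∈ Vs k)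
    (huh : ∀ φ ∈ Vs k, a uh φ = f φ - a ut φ)
    (ut' : V) (hut'mem : ut' ∈ tV ⊔ (ℝ ∙ uh))
    (hut' : ∀ v ∈ tV ⊔ (ℝ ∙ uh), a ut' v = f v) :
    ‖u - ut'‖ ≤ Real.sqrt (1 - 1 / (M * cpu ^ 2)) * ‖u - ut‖ := by
  set e := u - ut with he
  -- the residual represents the error
  have hR : ∀ v, (f - a ut) v = ⟪e, v⟫ := by
    intro v
    rw [ContinuousLinearMap.sub_apply, he, inner_sub_left, ← ha, ← ha, hu]
  -- on V k the residual is represented by uh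
  have hRk : ∀ φ ∈ Vs k, ⟪e, φ⟫ = ⟪uh, φ⟫ := by
    intro φ hφ
    have h1 := huh φ hφ
    rw [ha] at h1
    have h2 := hR φ
    rw [ContinuousLinearMap.sub_apply] at h2
    exact h2.symm.trans h1.symm
  -- the local dual norm is bounded by ‖uh‖
  have huhk : ‖(f - a ut).comp (Vs k).subtypeL‖ ≤ ‖uh‖ := by
    apply ContinuousLinearMap.opNorm_le_bound _ (norm_nonneg uh)
    intro x
    have hx : ((f - a ut).comp (Vs k).subtypeL) x = ⟪uh, (x : V)⟫ := by
      rw [ContinuousLinearMap.comp_apply, Submodule.subtypeL_apply, hR, hRk _ x.2]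
    rw [hx]
    calc ‖⟪uh, (x : V)⟫‖ = |⟪uh, (x : V)⟫| := rfl
      _ ≤ ‖uh‖ * ‖(x : V)‖ := abs_real_inner_le_norm _ _
      _ = ‖uh‖ * ‖x‖ := rfl
  -- the residual vanishes on the reduced space
  have hR0 : ∀ φ ∈ tV, (f - a ut) φ = 0 := by
    intro φ hφ
    rw [ContinuousLinearMap.sub_apply, hut φ hφ, sub_self]
  -- the error norm is bounded by the residual dual norm
  have hRe : ‖e‖ ≤ ‖f - a ut‖ := by
    rcases eq_or_ne e 0 with h | h
    · simp [h]
    · have h1 : ‖e‖ ^ 2 ≤ ‖f - a ut‖ * ‖e‖ := by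
        have h2 := (f - a ut).le_opNorm e
        have h3 : (f - a ut) e = ⟪e, e⟫ := hR e
        rw [h3, real_inner_self_eq_norm_sq] at h2
        calc ‖e‖ ^ 2 = |‖e‖ ^ 2| := (abs_of_nonneg (sq_nonneg _)).symm
          _ ≤ ‖f - a ut‖ * ‖e‖ := h2.trans_eq rfl
      have he0 : 0 < ‖e‖ := norm_pos_iff.mpr h
      nlinarith
  -- sum bound
  have hsum : ∑ i, ‖(f - a ut).comp (Vs i).subtypeL‖ ^ 2 ≤ (M : ℝ) * ‖uh‖ ^ 2 := by
    calc ∑ i, ‖(f - a ut).comp (Vs i).subtypeL‖ ^ 2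
        ≤ ∑ _i : Fin M, ‖uh‖ ^ 2 := by
          apply Finset.sum_le_sum
          intro i _
          have h1 : ‖(f - a ut).comp (Vs i).subtypeL‖ ≤ ‖uh‖ := (hk i).trans huhk
          have h0 : (0 : ℝ) ≤ ‖(f - a ut).comp (Vs i).subtypeL‖ :=
            ContinuousLinearMap.opNorm_nonneg _
          nlinarith
      _ = (M : ℝ) * ‖uh‖ ^ 2 := by
          rw [Finset.sum_const, Finset.card_univ, Fintype.card_fin, nsmul_eq_mul]
  -- key inequality: ‖e‖² ≤ M cpu² ‖uh‖²
  have hMpos : (0 : ℝ) < (M : ℝ) := by exact_mod_cast hM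
  have hesq : ‖e‖ ^ 2 ≤ cpu ^ 2 * ((M : ℝ) * ‖uh‖ ^ 2) := by
    have h1 := hcpu (f - a ut) hR0
    have h2 : ‖e‖ ≤ cpu * Real.sqrt ((M : ℝ) * ‖uh‖ ^ 2) := by
      refine (hRe.trans h1).trans ?_
      exact mul_le_mul_of_nonneg_left (Real.sqrt_le_sqrt hsum) hcpu0.le
    have h3 : 0 ≤ Real.sqrt ((M : ℝ) * ‖uh‖ ^ 2) := Real.sqrt_nonneg _
    have h4 : Real.sqrt ((M : ℝ) * ‖uh‖ ^ 2) ^ 2 = (M : ℝ) * ‖uh‖ ^ 2 :=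
      Real.sq_sqrt (by positivity)
    nlinarith [norm_nonneg e]
  have hMc : (0 : ℝ) < (M : ℝ) * cpu ^ 2 := by positivity
  have huhe2 : ‖e‖ ^ 2 / ((M : ℝ) * cpu ^ 2) ≤ ‖uh‖ ^ 2 := by
    rw [div_le_iff₀ hMc]
    nlinarith
  -- Galerkin orthogonality
  have hgal : ∀ v ∈ tV ⊔ (ℝ ∙ uh), ⟪u - ut', v⟫ = 0 := by
    intro v hv
    rw [inner_sub_left, ← ha, ← ha, hu, hut' v hv, sub_self]
  set w := ut + uh with hwdef
  have hwmem : w ∈ tV ⊔ (ℝ ∙ uh) :=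
    Submodule.add_mem _ (Submodule.mem_sup_left hutmem)
      (Submodule.mem_sup_right (Submodule.mem_span_singleton_self uh))
  -- best approximation
  have hbest : ‖u - ut'‖ ≤ ‖u - w‖ := by
    have h0 : ⟪u - ut', ut' - w⟫ = 0 := hgal _ (Submodule.sub_mem _ hut'mem hwmem)
    have h1 : ‖u - ut'‖ ^ 2 = ⟪u - ut', u - w⟫ := by
      have hdec : u - w = (u - ut') + (ut' - w) := by abel
      rw [hdec, inner_add_right, h0, add_zero, real_inner_self_eq_norm_sq]
    have h2 : ⟪u - ut', u - w⟫ ≤ ‖u - ut'‖ * ‖u - w‖ := real_inner_le_norm _ _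
    nlinarith [norm_nonneg (u - ut'), norm_nonneg (u - w)]
  have hw2 : ‖u - w‖ ^ 2 = ‖e‖ ^ 2 - ‖uh‖ ^ 2 := by
    have huw : u - w = e - uh := by rw [he, hwdef]; abel
    have hinner : ⟪e, uh⟫ = ‖uh‖ ^ 2 := by
      rw [hRk uh huhmem, real_inner_self_eq_norm_sq]
    rw [huw, norm_sub_sq_real, hinner]; ring
  -- combine
  have hfin : ‖u - ut'‖ ^ 2 ≤ (1 - 1 / ((M : ℝ) * cpu ^ 2)) * ‖e‖ ^ 2 := by
    have hdiv : ‖e‖ ^ 2 / ((M : ℝ) * cpu ^ 2) = ‖e‖ ^ 2 * (1 / ((M : ℝ) * cpu ^ 2)) := by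
      ring
    nlinarith [hbest, hw2, huhe2, norm_nonneg (u - ut'), norm_nonneg (u - w)]
  calc ‖u - ut'‖ = Real.sqrt (‖u - ut'‖ ^ 2) := (Real.sqrt_sq (norm_nonneg _)).symm
    _ ≤ Real.sqrt ((1 - 1 / ((M : ℝ) * cpu ^ 2)) * ‖e‖ ^ 2) := Real.sqrt_le_sqrt hfin
    _ = Real.sqrt (1 - 1 / ((M : ℝ) * cpu ^ 2)) * ‖e‖ := by
        rw [Real.sqrt_mul' _ (sq_nonneg ‖e‖), Real.sqrt_sq (norm_nonneg e)]
end

section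
/- In the globally coupled local enrichment algorithm, the new reduced solution ũ_{n+1} equals the locally enriched solution ũ_e^{(k)} that minimizes the energy error, and this is optimal: ||u − ũ_{n+1}||_a = min over i = 1..M and over ψ_e ∈ V_i of the energy error ||u − ũ_e||_a, where ũ_e is the Galerkin solution in ~V_n ⊕ span{ψ_e}. In particular, since u − ũ_e^{(i)} is a-orthogonal to ũ_e^{(i)} − ũ_n, one has ||u − ũ_n||²_a = ||u − ũ_e^{(i)}||²_a + ||ũ_e^{(i)} − ũ_n||²_a, so maximizing ||ũ_n − ũ_e^{(i)}||_a over i minimizes ||u − ũ_e^{(i)}||_a. -/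
open scoped RealInnerProductSpace

/-- optimality of the globally coupled local enrichment.
The Hilbert space `V` carries the energy norm, i.e. the bilinear form `a`
coincides with the inner product of `V`. `ue i` denotes the Galerkin solution in
`~V_n ⊕ V_i`, `k` maximizes the solution shift `‖ut - ue i‖_a`, and `ut'` is the
Galerkin solution in `~V_{n+1} = ~V_n ⊕ span{ue k}`. The conclusion states:
`ut' = ue k`; the Pythagorean identity from `a`-orthogonality; and optimality of
`ut'` among all enrichments by a single element of any local space. -/
theorem globally_coupled_enrichment_optimality
    {V : Type*} [NormedAddCommGroup V] [InnerProductSpace ℝ V] [CompleteSpace V]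
    (a : V →L[ℝ] V →L[ℝ] ℝ) (ha : ∀ v w : V, a v w = ⟪v, w⟫)
    (f : V →L[ℝ] ℝ) (u : V) (hu : ∀ v, a u v = f v)
    {M : ℕ} (Vs : Fin M → Submodule ℝ V)
    (tV : Submodule ℝ V)
    (ut : V) (hutmem : ut ∈ tV) (hut : ∀ v ∈ tV, a ut v = f v)
    (ue : Fin M → V) (huemem : ∀ i, ue i ∈ tV ⊔ Vs i)
    (hue : ∀ i, ∀ v ∈ tV ⊔ Vs i, a (ue i) v = f v)
    (k : Fin M) (hk : ∀ i, ‖ut - ue i‖ ≤ ‖ut - ue k‖)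
    (ut' : V) (hut'mem : ut' ∈ tV ⊔ (ℝ ∙ ue k))
    (hut' : ∀ v ∈ tV ⊔ (ℝ ∙ ue k), a ut' v = f v) :
    ut' = ue k ∧
    (∀ i, ‖u - ut‖ ^ 2 = ‖u - ue i‖ ^ 2 + ‖ue i - ut‖ ^ 2) ∧
    (∀ i, ∀ ψ ∈ Vs i, ∀ w ∈ tV ⊔ (ℝ ∙ ψ),
      (∀ v ∈ tV ⊔ (ℝ ∙ ψ), a w v = f v) → ‖u - ut'‖ ≤ ‖u - w‖) := by
  -- Galerkin orthogonality
  have orth : ∀ (w : V) (S : Submodule ℝ V), (∀ v ∈ S, a w v = f v) →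
      ∀ v ∈ S, ⟪u - w, v⟫ = (0 : ℝ) := by
    intro w S hw v hv
    rw [inner_sub_left, ← ha, ← ha, hu v, hw v hv, sub_self]
  have hle : tV ⊔ (ℝ ∙ ue k) ≤ tV ⊔ Vs k :=
    sup_le le_sup_left ((Submodule.span_singleton_le_iff_mem _ _).2 (huemem k))
  have hk_eq : ut' = ue k := by
    have hd : ut' - ue k ∈ tV ⊔ (ℝ ∙ ue k) :=
      Submodule.sub_mem _ hut'mem
        (Submodule.mem_sup_right (Submodule.mem_span_singleton_self _))
    have h1 := orth ut' _ hut' _ hd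
    have h2 := orth (ue k) _ (hue k) _ (hle hd)
    have h3 : ⟪ut' - ue k, ut' - ue k⟫ = (0 : ℝ) := by
      have e : ⟪ut' - ue k, ut' - ue k⟫ =
          ⟪u - ue k, ut' - ue k⟫ - ⟪u - ut', ut' - ue k⟫ := by
        rw [← inner_sub_left]
        congr 1
        abel
      rw [e, h1, h2, sub_zero]
    exact sub_eq_zero.mp (inner_self_eq_zero.mp h3)
  -- Pythagoras in a general form
  have pythgen : ∀ (w : V) (S : Submodule ℝ V), (∀ v ∈ S, a w v = f v) →
      w - ut ∈ S → ‖u - ut‖ ^ 2 = ‖u - w‖ ^ 2 + ‖w - ut‖ ^ 2 := by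
    intro w S hw hm
    have ho := orth w _ hw _ hm
    have hn := norm_add_sq_real (u - w) (w - ut)
    rw [ho] at hn
    have e : u - w + (w - ut) = u - ut := by abel
    rw [e] at hn
    linarith
  have pyth : ∀ i, ‖u - ut‖ ^ 2 = ‖u - ue i‖ ^ 2 + ‖ue i - ut‖ ^ 2 := by
    intro i
    exact pythgen (ue i) _ (hue i)
      (Submodule.sub_mem _ (huemem i) (Submodule.mem_sup_left hutmem))
  refine ⟨hk_eq, pyth, ?_⟩
  intro i ψ hψ w hwmem hw
  rw [hk_eq]
  have hWle : tV ⊔ (ℝ ∙ ψ) ≤ tV ⊔ Vs i :=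
    sup_le le_sup_left
      ((Submodule.span_singleton_le_iff_mem _ _).2 (Submodule.mem_sup_right hψ))
  have hdw : w - ut ∈ tV ⊔ (ℝ ∙ ψ) :=
    Submodule.sub_mem _ hwmem (Submodule.mem_sup_left hutmem)
  have h1 : ⟪u - w, w - ut⟫ = (0 : ℝ) := orth w _ hw _ hdw
  have h2 : ⟪u - ue i, w - ut⟫ = (0 : ℝ) := orth (ue i) _ (hue i) _ (hWle hdw)
  -- ‖w - ut‖ ≤ ‖ue i - ut‖
  have key : ‖w - ut‖ ≤ ‖ue i - ut‖ := by
    have e1 : ⟪w - ut, w - ut⟫ = ⟪ue i - ut, w - ut⟫ := by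
      have h3 : ⟪(ue i - ut) - (w - ut), w - ut⟫ = (0 : ℝ) := by
        have e : (ue i - ut) - (w - ut) = (u - w) - (u - ue i) := by abel
        rw [e, inner_sub_left, h1, h2, sub_zero]
      rw [inner_sub_left] at h3
      linarith
    have e2 : ⟪w - ut, w - ut⟫ = ‖w - ut‖ ^ 2 := real_inner_self_eq_norm_sq _
    have e3 : ⟪ue i - ut, w - ut⟫ ≤ ‖ue i - ut‖ * ‖w - ut‖ := real_inner_le_norm _ _
    nlinarith [norm_nonneg (w - ut), norm_nonneg (ue i - ut)]
  have hk' : ‖ue i - ut‖ ≤ ‖ue k - ut‖ := by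
    rw [norm_sub_rev, norm_sub_rev (ue k)]; exact hk i
  have pw : ‖u - ut‖ ^ 2 = ‖u - w‖ ^ 2 + ‖w - ut‖ ^ 2 := pythgen w _ hw hdw
  have pk := pyth k
  have hx : ‖w - ut‖ ^ 2 ≤ ‖ue k - ut‖ ^ 2 :=
    pow_le_pow_left₀ (norm_nonneg _) (key.trans hk') 2
  have hsq : ‖u - ue k‖ ^ 2 ≤ ‖u - w‖ ^ 2 := by linarith
  nlinarith [norm_nonneg (u - ue k), norm_nonneg (u - w)]
end
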